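/- Let Ω ⊆ ℂ be open and let r, q, p : Ω → ℂ be smooth with r nowhere vanishing. Suppose on Ω: r_z̄ = −i·r·q̄ and (i/2)·((q̄)_z − q_z̄) = |r|² − |p|². Then the smooth function û := log(2|r|²) satisfies û_{zz̄} + e^û − 2|p|² = 0 on Ω. In particular, if additionally 4|p|²|r|² = |α|² on Ω for some function α : Ω → ℂ, then û satisfies the elliptic sinh–Gordon equation û_{zz̄} + e^û − |α|² e^{−û} = 0 on Ω. -/

import Mathlib

/-! Since `e^û = 2 r r̄`, one gets `û_z = r_z / r + conj (r_z̄ / r) = r_z / r + i q` from the first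
equation. As `r_z̄ = r · (-i q̄)`, symmetry of second derivatives gives
`(r_z / r)_z̄ = (r_z̄ / r)_z = -i q̄_z`, hence `û_zz̄ = i (q_z̄ - q̄_z) = -2 (|r|² - |p|²)` by the
second equation, while `e^û = 2 |r|²` and `|α|² e^{-û} = 2 |p|²`. -/

open Complex ComplexConjugate

/-- Wirtinger derivative `g_z = (∂ₓg - i ∂_y g)/2`. -/
noncomputable def wderivZ (g : ℂ → ℂ) (w : ℂ) : ℂ :=
  (fderiv ℝ g w 1 - Complex.I * fderiv ℝ g w Complex.I) / 2

/-- Wirtinger derivative `g_z̄ = (∂ₓg + i ∂_y g)/2`. -/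
noncomputable def wderivZbar (g : ℂ → ℂ) (w : ℂ) : ℂ :=
  (fderiv ℝ g w 1 + Complex.I * fderiv ℝ g w Complex.I) / 2

/-- `û := log(2|r|²)`. -/
noncomputable def uhat (r : ℂ → ℂ) (w : ℂ) : ℝ :=
  Real.log (2 * ‖r w‖ ^ 2)

open Filter Topology

section Wirtinger

variable {f g : ℂ → ℂ} {w : ℂ}

lemma wderivZ_congr (h : f =ᶠ[𝓝 w] g) : wderivZ f w = wderivZ g w := by
  rw [wderivZ, wderivZ, h.fderiv_eq]

lemma wderivZbar_congr (h : f =ᶠ[𝓝 w] g) : wderivZbar f w = wderivZbar g w := by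
  rw [wderivZbar, wderivZbar, h.fderiv_eq]

lemma wderivZbar_add (hf : DifferentiableAt ℝ f w) (hg : DifferentiableAt ℝ g w) :
    wderivZbar (fun z => f z + g z) w = wderivZbar f w + wderivZbar g w := by
  simp only [wderivZbar, fderiv_fun_add hf hg, add_apply]
  ring

lemma wderivZ_const_mul (c : ℂ) (hf : DifferentiableAt ℝ f w) :
    wderivZ (fun z => c * f z) w = c * wderivZ f w := by
  simp only [wderivZ, (hf.hasFDerivAt.const_mul c).fderiv, smul_apply, smul_eq_mul]
  ring

lemma wderivZbar_const_mul (c : ℂ) (hf : DifferentiableAt ℝ f w) :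
    wderivZbar (fun z => c * f z) w = c * wderivZbar f w := by
  simp only [wderivZbar, (hf.hasFDerivAt.const_mul c).fderiv, smul_apply, smul_eq_mul]
  ring

lemma wderivZ_mul (hf : DifferentiableAt ℝ f w) (hg : DifferentiableAt ℝ g w) :
    wderivZ (fun z => f z * g z) w = f w * wderivZ g w + g w * wderivZ f w := by
  simp only [wderivZ, fderiv_fun_mul hf hg, add_apply, smul_apply, smul_eq_mul]
  ring

lemma wderivZbar_mul (hf : DifferentiableAt ℝ f w) (hg : DifferentiableAt ℝ g w) :
    wderivZbar (fun z => f z * g z) w = f w * wderivZbar g w + g w * wderivZbar f w := by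
  simp only [wderivZbar, fderiv_fun_mul hf hg, add_apply, smul_apply, smul_eq_mul]
  ring

lemma wderivZ_conj (hf : DifferentiableAt ℝ f w) :
    wderivZ (fun z => conj (f z)) w = conj (wderivZbar f w) := by
  have h := (conjCLE.hasFDerivAt.comp w hf.hasFDerivAt).fderiv
  simp only [Function.comp_def, conjCLE_apply] at h
  simp only [wderivZ, wderivZbar, h, ContinuousLinearMap.comp_apply,
    ContinuousLinearEquiv.coe_coe, conjCLE_apply, map_div₀, map_add, map_mul, conj_I,
    map_ofNat]
  ring

lemma wderivZ_comp {φ : ℂ → ℂ} {c : ℂ} (hφ : HasDerivAt φ c (f w))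
    (hf : DifferentiableAt ℝ f w) :
    wderivZ (fun z => φ (f z)) w = c * wderivZ f w := by
  have h := ((hφ.hasFDerivAt.restrictScalars ℝ).comp w hf.hasFDerivAt).fderiv
  simp only [wderivZ, Function.comp_def] at h ⊢
  simp [h]
  ring

lemma wderivZbar_comp {φ : ℂ → ℂ} {c : ℂ} (hφ : HasDerivAt φ c (f w))
    (hf : DifferentiableAt ℝ f w) :
    wderivZbar (fun z => φ (f z)) w = c * wderivZbar f w := by
  have h := ((hφ.hasFDerivAt.restrictScalars ℝ).comp w hf.hasFDerivAt).fderiv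
  simp only [wderivZbar, Function.comp_def] at h ⊢
  simp [h]
  ring

end Wirtinger

section SecondOrder

variable {f : ℂ → ℂ} {w : ℂ}

lemma hasFDerivAt_fderiv_apply (hf : ContDiffAt ℝ 2 f w) (v : ℂ) :
    HasFDerivAt (fun z => fderiv ℝ f z v)
      ((ContinuousLinearMap.apply ℝ ℂ v).comp (fderiv ℝ (fderiv ℝ f) w)) w :=
  (ContinuousLinearMap.apply ℝ ℂ v).hasFDerivAt.comp w
    ((hf.fderiv_right (m := 1) le_rfl).differentiableAt one_ne_zero).hasFDerivAt

lemma differentiableAt_wderivZ (hf : ContDiffAt ℝ 2 f w) :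
    DifferentiableAt ℝ (wderivZ f) w := by
  have h1 := (hasFDerivAt_fderiv_apply hf 1).differentiableAt
  have hI := (hasFDerivAt_fderiv_apply hf I).differentiableAt
  unfold wderivZ
  fun_prop

lemma fderiv_wderivZ_apply (hf : ContDiffAt ℝ 2 f w) (u : ℂ) :
    fderiv ℝ (wderivZ f) w u
      = (fderiv ℝ (fderiv ℝ f) w u 1 - I * fderiv ℝ (fderiv ℝ f) w u I) / 2 := by
  have h := ((hasFDerivAt_fderiv_apply hf 1).fun_sub
    ((hasFDerivAt_fderiv_apply hf I).const_mul I)).mul_const (2⁻¹ : ℂ)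
  rw [(h.congr_of_eventuallyEq (f₁ := wderivZ f) (.of_forall fun z => div_eq_mul_inv _ _)).fderiv]
  simp
  ring

lemma fderiv_wderivZbar_apply (hf : ContDiffAt ℝ 2 f w) (u : ℂ) :
    fderiv ℝ (wderivZbar f) w u
      = (fderiv ℝ (fderiv ℝ f) w u 1 + I * fderiv ℝ (fderiv ℝ f) w u I) / 2 := by
  have h := ((hasFDerivAt_fderiv_apply hf 1).fun_add
    ((hasFDerivAt_fderiv_apply hf I).const_mul I)).mul_const (2⁻¹ : ℂ)
  rw [(h.congr_of_eventuallyEq (f₁ := wderivZbar f)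
    (.of_forall fun z => div_eq_mul_inv _ _)).fderiv]
  simp
  ring

lemma wderivZbar_wderivZ_comm (hf : ContDiffAt ℝ 2 f w) :
    wderivZbar (wderivZ f) w = wderivZ (wderivZbar f) w := by
  have hsymm := hf.isSymmSndFDerivAt (by simp) 1 I
  rw [wderivZbar, wderivZ, fderiv_wderivZ_apply hf, fderiv_wderivZ_apply hf,
    fderiv_wderivZbar_apply hf, fderiv_wderivZbar_apply hf, hsymm]
  ring

end SecondOrder

section LogModulus

variable {r : ℂ → ℂ} {w : ℂ}

lemma ofReal_two_mul_norm_sq (z : ℂ) : ((2 * ‖z‖ ^ 2 : ℝ) : ℂ) = 2 * z * conj z := by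
  rw [mul_assoc, mul_conj, normSq_eq_norm_sq]
  push_cast
  rfl

lemma ofReal_uhat (z : ℂ) : (uhat r z : ℂ) = log (2 * r z * conj (r z)) := by
  rw [uhat, ofReal_log (by positivity), ofReal_two_mul_norm_sq]

lemma exp_uhat (hr0 : r w ≠ 0) : Real.exp (uhat r w) = 2 * ‖r w‖ ^ 2 :=
  Real.exp_log (by positivity)

lemma wderivZ_uhat (hr : DifferentiableAt ℝ r w) (hr0 : r w ≠ 0) :
    wderivZ (fun z => (uhat r z : ℂ)) w = wderivZ r w / r w + conj (wderivZbar r w / r w) := by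
  have hslit : 2 * r w * conj (r w) ∈ slitPlane := by
    rw [← ofReal_two_mul_norm_sq]
    exact ofReal_mem_slitPlane.2 (by positivity)
  simp_rw [ofReal_uhat]
  have hrr : DifferentiableAt ℝ (fun z => r z * conj (r z)) w := by fun_prop
  rw [wderivZ_comp (f := fun z => 2 * r z * conj (r z)) (hasDerivAt_log hslit) (by fun_prop)]
  simp_rw [mul_assoc]
  rw [wderivZ_const_mul _ hrr, wderivZ_mul hr (by fun_prop), wderivZ_conj hr]
  have hconj : conj (r w) ≠ 0 := by simpa using hr0
  rw [map_div₀]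
  field_simp
  ring

lemma wderivZbar_wderivZ_div_self {a : ℂ → ℂ} (hr : ContDiffAt ℝ 2 r w) (hr0 : r w ≠ 0)
    (ha : DifferentiableAt ℝ a w) (h : ∀ᶠ z in 𝓝 w, wderivZbar r z = r z * a z) :
    wderivZbar (fun z => wderivZ r z / r z) w = wderivZ a w := by
  have hr1 := hr.differentiableAt two_ne_zero
  have hmixed : wderivZbar (wderivZ r) w = r w * wderivZ a w + a w * wderivZ r w := by
    rw [wderivZbar_wderivZ_comm hr, wderivZ_congr h, wderivZ_mul hr1 ha]
  simp_rw [div_eq_mul_inv]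
  rw [wderivZbar_mul (g := fun z => (r z)⁻¹) (differentiableAt_wderivZ hr) (hr1.inv hr0),
    wderivZbar_comp (hasDerivAt_inv hr0) hr1, h.self_of_nhds, hmixed]
  field_simp
  ring

end LogModulus

theorem wderivZbar_wderivZ_uhat {r q : ℂ → ℂ} {w : ℂ} (hr : ContDiffAt ℝ 2 r w)
    (hq : DifferentiableAt ℝ q w) (hr0 : ∀ᶠ z in 𝓝 w, r z ≠ 0)
    (hrq : ∀ᶠ z in 𝓝 w, wderivZbar r z = -I * r z * conj (q z)) :
    wderivZbar (fun z => wderivZ (fun z' => (uhat r z' : ℂ)) z) w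
      = I * (wderivZbar q w - wderivZ (fun z => conj (q z)) w) := by
  have hgrad : (fun z => wderivZ (fun z' => (uhat r z' : ℂ)) z)
      =ᶠ[𝓝 w] fun z => wderivZ r z / r z + I * q z := by
    filter_upwards [hr.eventually (by simp), hr0, hrq] with z hrz hz0 hzq
    have hcancel : -I * r z * conj (q z) / r z = -I * conj (q z) := by field_simp
    rw [wderivZ_uhat (hrz.differentiableAt two_ne_zero) hz0, hzq, hcancel]
    simp
  have hlog : wderivZbar (fun z => wderivZ r z / r z) w
      = -I * wderivZ (fun z => conj (q z)) w := by
    rw [wderivZbar_wderivZ_div_self (a := fun z => -I * conj (q z)) hr hr0.self_of_nhds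
      (by fun_prop) (hrq.mono fun z hz => by rw [hz]; ring), wderivZ_const_mul _ (by fun_prop)]
  have hdiv : DifferentiableAt ℝ (fun z => wderivZ r z / r z) w := by
    simpa only [div_eq_mul_inv] using (differentiableAt_wderivZ hr).fun_mul
      ((hr.differentiableAt two_ne_zero).fun_inv hr0.self_of_nhds)
  rw [wderivZbar_congr hgrad, wderivZbar_add hdiv (by fun_prop),
    wderivZbar_const_mul _ hq, hlog]
  ring

theorem stmt6_general (Ω : Set ℂ) (hΩ : IsOpen Ω)
    (r q p : ℂ → ℂ)
    (hr : ContDiffOn ℝ (⊤ : ℕ∞) r Ω)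
    (hq : ContDiffOn ℝ (⊤ : ℕ∞) q Ω)
    (hr0 : ∀ w ∈ Ω, r w ≠ 0)
    (h1 : ∀ w ∈ Ω, wderivZbar r w = -Complex.I * r w * conj (q w))
    (h2 : ∀ w ∈ Ω,
      (Complex.I / 2) * (wderivZ (fun z => conj (q z)) w - wderivZbar q w)
        = (‖r w‖ : ℂ) ^ 2 - (‖p w‖ : ℂ) ^ 2) :
    (∀ w ∈ Ω,
        wderivZbar (fun z => wderivZ (fun z' => (uhat r z' : ℂ)) z) w
          + (Real.exp (uhat r w) : ℂ) - 2 * (‖p w‖ : ℂ) ^ 2 = 0) ∧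
    (∀ α : ℂ → ℂ,
      (∀ w ∈ Ω, 4 * ‖p w‖ ^ 2 * ‖r w‖ ^ 2 = ‖α w‖ ^ 2) →
      ∀ w ∈ Ω,
        wderivZbar (fun z => wderivZ (fun z' => (uhat r z' : ℂ)) z) w
          + (Real.exp (uhat r w) : ℂ)
          - (‖α w‖ : ℂ) ^ 2 * (Real.exp (-uhat r w) : ℂ) = 0) := by
  have hlap : ∀ w ∈ Ω, wderivZbar (fun z => wderivZ (fun z' => (uhat r z' : ℂ)) z) w
      = -2 * ((‖r w‖ : ℂ) ^ 2 - (‖p w‖ : ℂ) ^ 2) := by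
    intro w hw
    have hΩw := hΩ.mem_nhds hw
    rw [wderivZbar_wderivZ_uhat ((hr.contDiffAt hΩw).of_le (by decide))
      ((hq.contDiffAt hΩw).differentiableAt (by decide)) (eventually_of_mem hΩw hr0)
      (eventually_of_mem hΩw h1)]
    linear_combination (-2 : ℂ) * h2 w hw
  refine ⟨fun w hw => ?_, fun α hα w hw => ?_⟩
  · rw [hlap w hw, exp_uhat (hr0 w hw)]
    push_cast
    ring
  · have hr0' : (‖r w‖ : ℂ) ≠ 0 := by simpa using hr0 w hw
    have hα' : (4 : ℂ) * (‖p w‖ : ℂ) ^ 2 * (‖r w‖ : ℂ) ^ 2 = (‖α w‖ : ℂ) ^ 2 := by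
      exact_mod_cast hα w hw
    rw [hlap w hw, Real.exp_neg, exp_uhat (hr0 w hw), ← hα']
    push_cast
    field_simp
    ring

theorem stmt6 (Ω : Set ℂ) (hΩ : IsOpen Ω)
    (r q p : ℂ → ℂ)
    (hr : ContDiffOn ℝ (⊤ : ℕ∞) r Ω)
    (hq : ContDiffOn ℝ (⊤ : ℕ∞) q Ω)
    (hp : ContDiffOn ℝ (⊤ : ℕ∞) p Ω)
    (hr0 : ∀ w ∈ Ω, r w ≠ 0)
    (h1 : ∀ w ∈ Ω, wderivZbar r w = -Complex.I * r w * conj (q w))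
    (h2 : ∀ w ∈ Ω,
      (Complex.I / 2) * (wderivZ (fun z => conj (q z)) w - wderivZbar q w)
        = (‖r w‖ : ℂ) ^ 2 - (‖p w‖ : ℂ) ^ 2) :
    (∀ w ∈ Ω,
        wderivZbar (fun z => wderivZ (fun z' => (uhat r z' : ℂ)) z) w
          + (Real.exp (uhat r w) : ℂ) - 2 * (‖p w‖ : ℂ) ^ 2 = 0) ∧
    (∀ α : ℂ → ℂ,
      (∀ w ∈ Ω, 4 * ‖p w‖ ^ 2 * ‖r w‖ ^ 2 = ‖α w‖ ^ 2) →
      ∀ w ∈ Ω,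
        wderivZbar (fun z => wderivZ (fun z' => (uhat r z' : ℂ)) z) w
          + (Real.exp (uhat r w) : ℂ)
          - (‖α w‖ : ℂ) ^ 2 * (Real.exp (-uhat r w) : ℂ) = 0) :=
  stmt6_general Ω hΩ r q p hr hq hr0 h1 h2
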